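/- arXiv:2602.01770 — 3 statements merged into one kernel-verified Lean document; each statement's English description precedes it below -/
import Mathlib

section
/- Suppose the standard ABC posterior measures Π_ε_n(· | y) concentrate on a point θ_0, i.e. for every open neighborhood U of θ_0, Π_ε_n(U^c | y) → 0 in probability as n → ∞. Suppose further that the pre-filtering defect a_{L,n} = ∫ π_{ε_n}(θ)(1 - Q_n(θ)) dθ → 0, where Q_n : Θ → [0,1] is measurable and the multifidelity posterior is π_{ε_n, ε̃_n}(θ) ∝ π_{ε_n}(θ) Q_n(θ). Then Π_{ε_n, ε̃_n}(U^c | y) → 0 in probability as well; that is, the multifidelity ABC posterior inherits posterior concentration at θ_0. -/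
open MeasureTheory Filter

/-! On the event `a n ω ≤ 1/2`, the multifidelity mass of `Uᶜ` is at most
`(∫_{Uᶜ} πn n ω) / (1 - a n ω) ≤ 2 ∫_{Uᶜ} πn n ω`, since the factor `Qn n ≤ 1` can only
remove mass. So the bad event for the multifidelity posterior is covered by the bad event
for the standard posterior at level `δ / 2` together with `{1/2 < a n ω}`, and both have
vanishing probability. -/

theorem integral_mul_le_integral_of_le_one {α : Type*} [MeasurableSpace α] {μ : Measure α}
    {f g : α → ℝ} (hf : ∀ x, 0 ≤ f x) (hfi : Integrable f μ) (hg : ∀ x, g x ≤ 1) :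
    ∫ x, f x * g x ∂μ ≤ ∫ x, f x ∂μ := by
  by_cases hfg : Integrable (fun x => f x * g x) μ
  · exact integral_mono hfg hfi fun x => mul_le_of_le_one_right (hf x) (hg x)
  · rw [integral_undef hfg]
    exact integral_nonneg hf

theorem div_one_sub_le_two_mul {I J a : ℝ} (hI : 0 ≤ I) (hJ : J ≤ I) (ha : a ≤ 1 / 2) :
    J / (1 - a) ≤ 2 * I := by
  rw [div_le_iff₀ (by linarith)]
  nlinarith

theorem tendsto_toReal_measure_of_subset_union {Ω : Type*} [MeasurableSpace Ω]
    {P : Measure Ω} [IsFiniteMeasure P] {A B C : ℕ → Set Ω} (hABC : ∀ n, A n ⊆ B n ∪ C n)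
    (hB : Tendsto (fun n => (P (B n)).toReal) atTop (nhds 0))
    (hC : Tendsto (fun n => (P (C n)).toReal) atTop (nhds 0)) :
    Tendsto (fun n => (P (A n)).toReal) atTop (nhds 0) := by
  refine squeeze_zero (fun n => ENNReal.toReal_nonneg) (fun n => ?_) (by simpa using hB.add hC)
  calc (P (A n)).toReal ≤ (P (B n ∪ C n)).toReal := measureReal_mono (hABC n)
    _ ≤ (P (B n)).toReal + (P (C n)).toReal := measureReal_union_le _ _

theorem multifidelity_posterior_concentration_general
    {Ω Θ : Type*} [MeasurableSpace Ω] [MeasurableSpace Θ] [TopologicalSpace Θ]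
    (P : Measure Ω) [IsProbabilityMeasure P] (ν : Measure Θ) (θ₀ : Θ)
    (πn : ℕ → Ω → Θ → ℝ) (Qn : ℕ → Θ → ℝ) (a : ℕ → Ω → ℝ)
    (hπ_nonneg : ∀ n ω θ, 0 ≤ πn n ω θ)
    (hπ_int : ∀ n ω, Integrable (πn n ω) ν)
    (hQ1 : ∀ n θ, Qn n θ ≤ 1)
    (hconc : ∀ U : Set Θ, IsOpen U → θ₀ ∈ U → ∀ δ > 0,
      Tendsto (fun n => (P {ω | δ < ∫ θ in Uᶜ, πn n ω θ ∂ν}).toReal) atTop (nhds 0))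
    (ha0 : ∀ δ > 0,
      Tendsto (fun n => (P {ω | δ < a n ω}).toReal) atTop (nhds 0)) :
    ∀ U : Set Θ, IsOpen U → θ₀ ∈ U → ∀ δ > 0,
      Tendsto (fun n =>
          (P {ω | δ < ∫ θ in Uᶜ, πn n ω θ * Qn n θ / (1 - a n ω) ∂ν}).toReal)
        atTop (nhds 0) := by
  intro U hU hθ₀ δ hδ
  refine tendsto_toReal_measure_of_subset_union (fun n ω hω => ?_)
    (hconc U hU hθ₀ (δ / 2) (half_pos hδ)) (ha0 (1 / 2) one_half_pos)
  by_contra! hgood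
  simp only [Set.mem_union, Set.mem_ofPred_eq, not_or, not_lt] at hgood hω
  have hmass : (∫ θ in Uᶜ, πn n ω θ * Qn n θ ∂ν) / (1 - a n ω) ≤ 2 * ∫ θ in Uᶜ, πn n ω θ ∂ν :=
    div_one_sub_le_two_mul (integral_nonneg (hπ_nonneg n ω))
      (integral_mul_le_integral_of_le_one (hπ_nonneg n ω) (hπ_int n ω).restrict (hQ1 n)) hgood.2
  rw [← integral_div] at hmass
  linarith [hgood.1]

/-- Theorem 1 (essential content): posterior concentration is inherited by the
multifidelity ABC posterior.  The data are random (`ω ∼ P`); `πn n ω` is the standard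
ABC posterior density at tolerance `ε_n`, which concentrates at `θ₀` in probability;
`Qn n` is the measurable low-fidelity survival probability with pre-filtering defect
`a n ω = ∫ πn n ω (1 - Qn n) dν → 0` in probability; the multifidelity posterior has
density `πn n ω · Qn n / (1 - a n ω)`.  Then the multifidelity posterior mass of the
complement of every open neighborhood of `θ₀` also tends to `0` in probability. -/
theorem multifidelity_posterior_concentration
    {Ω Θ : Type*} [MeasurableSpace Ω] [MeasurableSpace Θ] [TopologicalSpace Θ]
    (P : Measure Ω) [IsProbabilityMeasure P] (ν : Measure Θ) (θ₀ : Θ)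
    (πn : ℕ → Ω → Θ → ℝ) (Qn : ℕ → Θ → ℝ) (a : ℕ → Ω → ℝ)
    (hπ_nonneg : ∀ n ω θ, 0 ≤ πn n ω θ)
    (hπ_prob : ∀ n ω, ∫ θ, πn n ω θ ∂ν = 1)
    (hπ_int : ∀ n ω, Integrable (πn n ω) ν)
    (hQ_meas : ∀ n, Measurable (Qn n))
    (hQ0 : ∀ n θ, 0 ≤ Qn n θ) (hQ1 : ∀ n θ, Qn n θ ≤ 1)
    (ha : ∀ n ω, a n ω = ∫ θ, πn n ω θ * (1 - Qn n θ) ∂ν)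
    (ha1 : ∀ n ω, a n ω < 1)
    (hconc : ∀ U : Set Θ, IsOpen U → θ₀ ∈ U → ∀ δ > 0,
      Tendsto (fun n => (P {ω | δ < ∫ θ in Uᶜ, πn n ω θ ∂ν}).toReal) atTop (nhds 0))
    (ha0 : ∀ δ > 0,
      Tendsto (fun n => (P {ω | δ < a n ω}).toReal) atTop (nhds 0)) :
    ∀ U : Set Θ, IsOpen U → θ₀ ∈ U → ∀ δ > 0,
      Tendsto (fun n =>
          (P {ω | δ < ∫ θ in Uᶜ, πn n ω θ * Qn n θ / (1 - a n ω) ∂ν}).toReal)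
        atTop (nhds 0) :=
  multifidelity_posterior_concentration_general P ν θ₀ πn Qn a hπ_nonneg hπ_int hQ1 hconc ha0
end

section
/- Consider a Metropolis–Hastings kernel on states z = (θ, x_{1:n}) with target density proportional to π(θ) (Σ_{k=1}^n 1{Δ(x_k, y) < ε}) Π_{k=1}^n p(x_k | θ) and proposal q(θ*|θ) Π_k p(x_k* | θ*), with acceptance probability α(z, z*) = min{1, [π(θ*) Σ_k 1{Δ(x_k*, y) < ε} q(θ|θ*)] / [π(θ) Σ_k 1{Δ(x_k, y) < ε} q(θ*|θ)]}. Then this kernel satisfies detailed balance with respect to the target, and hence the target is a stationary distribution of the kernel. -/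
open MeasureTheory

private lemma abc_aux (x y : ℝ) (hx : 0 ≤ x) (hy : 0 ≤ y) :
    x * min 1 (y / x) = min x y := by
  rcases eq_or_lt_of_le hx with h | h
  · simp [← h, min_eq_left hy]
  · rw [mul_min_of_nonneg _ _ h.le, mul_one, mul_div_cancel₀ y h.ne']

private lemma abc_mh (a b qa qb Pa Pb : ℝ) (ha : 0 ≤ a) (hb : 0 ≤ b)
    (hqa : 0 ≤ qa) (hqb : 0 ≤ qb) :
    a * Pa * (qa * Pb * min 1 (b * qb / (a * qa)))
      = b * Pb * (qb * Pa * min 1 (a * qa / (b * qb))) := by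
  have h1 := abc_aux (a * qa) (b * qb) (mul_nonneg ha hqa) (mul_nonneg hb hqb)
  have h2 := abc_aux (b * qb) (a * qa) (mul_nonneg hb hqb) (mul_nonneg ha hqa)
  calc a * Pa * (qa * Pb * min 1 (b * qb / (a * qa)))
      = Pa * Pb * (a * qa * min 1 (b * qb / (a * qa))) := by ring
    _ = Pa * Pb * min (a * qa) (b * qb) := by rw [h1]
    _ = Pa * Pb * (b * qb * min 1 (a * qa / (b * qb))) := by rw [h2, min_comm]
    _ = b * Pb * (qb * Pa * min 1 (a * qa / (b * qb))) := by ring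

/-- Correctness of the ABC-MCMC move: on the extended space of states
`z = (θ, x_{1:n})`, the Metropolis–Hastings kernel with target density
`ρ(θ,x) = π(θ) (Σ_k 1{Δ(x_k) < ε}) Π_k p(x_k|θ)`, proposal density
`q(θ*|θ) Π_k p(x_k*|θ*)` and acceptance probability
`α(z,z*) = min{1, [π(θ*) Σ_k 1{Δ(x_k*) < ε} q(θ|θ*)] / [π(θ) Σ_k 1{Δ(x_k) < ε} q(θ*|θ)]}`
satisfies detailed balance `ρ(z) t(z,z*) = ρ(z*) t(z*,z)` for the accepted-move
density `t(z,z*) = q(θ*|θ) Π_k p(x_k*|θ*) α(z,z*)`, and hence the target is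
stationary: `∫ ρ(z) t(z,z') dμ(z) = ρ(z') ∫ t(z',z) dμ(z)` for every `z'`. -/
theorem abc_mcmc_detailed_balance
    {Θ 𝒳 : Type*} [MeasurableSpace Θ] [MeasurableSpace 𝒳]
    (ν : Measure Θ) (ν𝒳 : Measure 𝒳) [SigmaFinite ν] [SigmaFinite ν𝒳]
    (n : ℕ) (π : Θ → ℝ) (p : 𝒳 → Θ → ℝ) (qprop : Θ → Θ → ℝ)
    (Δ : 𝒳 → ℝ) (ε : ℝ)
    (hπ_nonneg : ∀ θ, 0 ≤ π θ) (hp_nonneg : ∀ x θ, 0 ≤ p x θ)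
    (hq_nonneg : ∀ θ θ', 0 ≤ qprop θ θ')
    (ρ : Θ × (Fin n → 𝒳) → ℝ)
    (hρ : ∀ z, ρ z = π z.1 * (∑ k, (if Δ (z.2 k) < ε then (1:ℝ) else 0))
        * ∏ k, p (z.2 k) z.1)
    (t : Θ × (Fin n → 𝒳) → Θ × (Fin n → 𝒳) → ℝ)
    (ht : ∀ z z', t z z' = qprop z.1 z'.1 * (∏ k, p (z'.2 k) z'.1)
        * min 1 ((π z'.1 * (∑ k, (if Δ (z'.2 k) < ε then (1:ℝ) else 0)) * qprop z'.1 z.1)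
          / (π z.1 * (∑ k, (if Δ (z.2 k) < ε then (1:ℝ) else 0)) * qprop z.1 z'.1))) :
    (∀ z z', ρ z * t z z' = ρ z' * t z' z) ∧
    (∀ z', ∫ z, ρ z * t z z' ∂(ν.prod (Measure.pi fun _ => ν𝒳))
        = ρ z' * ∫ z, t z' z ∂(ν.prod (Measure.pi fun _ => ν𝒳))) := by
  have hS : ∀ z : Θ × (Fin n → 𝒳), (0:ℝ) ≤ ∑ k, (if Δ (z.2 k) < ε then (1:ℝ) else 0) := by
    intro z
    exact Finset.sum_nonneg fun k _ => by positivity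
  have key : ∀ z z', ρ z * t z z' = ρ z' * t z' z := by
    intro z z'
    rw [hρ z, hρ z', ht z z', ht z' z]
    have := abc_mh (π z.1 * (∑ k, (if Δ (z.2 k) < ε then (1:ℝ) else 0)))
      (π z'.1 * (∑ k, (if Δ (z'.2 k) < ε then (1:ℝ) else 0)))
      (qprop z.1 z'.1) (qprop z'.1 z.1)
      (∏ k, p (z.2 k) z.1) (∏ k, p (z'.2 k) z'.1)
      (mul_nonneg (hπ_nonneg _) (hS z)) (mul_nonneg (hπ_nonneg _) (hS z'))
      (hq_nonneg _ _) (hq_nonneg _ _)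
    linarith [this]
  refine ⟨key, fun z' => ?_⟩
  simp_rw [key]
  exact integral_const_mul _ _
end

section
/- Let p, p̃ : Θ → [0,1] be measurable with sup_θ |p(θ) - p̃(θ)| ≤ η, and let π be a probability density on Θ with Z = ∫ π p > 0 and Z̃ = ∫ π p̃ > 0. Then the normalized densities π_p = π p / Z and π_p̃ = π p̃ / Z̃ satisfy ∫ |π_p - π_p̃| dθ ≤ 2η / Z. -/
open MeasureTheory

/-- Stability of ABC posteriors under uniform perturbation of the approximate
likelihood: if `p, p̃ : Θ → [0,1]` satisfy `sup_θ |p(θ) - p̃(θ)| ≤ η` and the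
evidences `Z = ∫ π p` and `Z̃ = ∫ π p̃` are positive, then the normalized posteriors
`π p / Z` and `π p̃ / Z̃` satisfy `∫ |π p/Z - π p̃/Z̃| dν ≤ 2η / Z`. -/
theorem abc_posterior_stability
    {Θ : Type*} [MeasurableSpace Θ] (ν : Measure Θ)
    (π p ptil : Θ → ℝ) (η Z Ztil : ℝ)
    (hπ_meas : Measurable π) (hπ_nonneg : ∀ θ, 0 ≤ π θ)
    (hπ_int : Integrable π ν) (hπ_prob : ∫ θ, π θ ∂ν = 1)
    (hp_meas : Measurable p) (hp0 : ∀ θ, 0 ≤ p θ) (hp1 : ∀ θ, p θ ≤ 1)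
    (hptil_meas : Measurable ptil) (hptil0 : ∀ θ, 0 ≤ ptil θ) (hptil1 : ∀ θ, ptil θ ≤ 1)
    (hη : ∀ θ, |p θ - ptil θ| ≤ η)
    (hZ : Z = ∫ θ, π θ * p θ ∂ν) (hZtil : Ztil = ∫ θ, π θ * ptil θ ∂ν)
    (hZpos : 0 < Z) (hZtilpos : 0 < Ztil) :
    ∫ θ, |π θ * p θ / Z - π θ * ptil θ / Ztil| ∂ν ≤ 2 * η / Z := by
  have hintp : Integrable (fun θ => π θ * p θ) ν := by
    refine hπ_int.mono (hπ_meas.mul hp_meas).aestronglyMeasurable (ae_of_all _ fun θ => ?_)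
    simp only [Real.norm_eq_abs]
    rw [abs_of_nonneg (mul_nonneg (hπ_nonneg θ) (hp0 θ)), abs_of_nonneg (hπ_nonneg θ)]
    nlinarith [hπ_nonneg θ, hp0 θ, hp1 θ]
  have hintptil : Integrable (fun θ => π θ * ptil θ) ν := by
    refine hπ_int.mono (hπ_meas.mul hptil_meas).aestronglyMeasurable (ae_of_all _ fun θ => ?_)
    simp only [Real.norm_eq_abs]
    rw [abs_of_nonneg (mul_nonneg (hπ_nonneg θ) (hptil0 θ)), abs_of_nonneg (hπ_nonneg θ)]
    nlinarith [hπ_nonneg θ, hptil0 θ, hptil1 θ]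
  have hintdiff : Integrable (fun θ => π θ * |p θ - ptil θ|) ν := by
    refine ((hintp.sub hintptil).abs).congr (ae_of_all _ fun θ => ?_)
    simp only [Pi.sub_apply]
    rw [show π θ * p θ - π θ * ptil θ = π θ * (p θ - ptil θ) by ring, abs_mul,
      abs_of_nonneg (hπ_nonneg θ)]
  have hη' : ∫ θ, π θ * |p θ - ptil θ| ∂ν ≤ η := by
    calc ∫ θ, π θ * |p θ - ptil θ| ∂ν ≤ ∫ θ, π θ * η ∂ν := by
          refine integral_mono hintdiff (hπ_int.mul_const η) fun θ => ?_
          exact mul_le_mul_of_nonneg_left (hη θ) (hπ_nonneg θ)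
      _ = η := by rw [integral_mul_const, hπ_prob, one_mul]
  have hZdiff : |Ztil - Z| ≤ η := by
    have h : Ztil - Z = ∫ θ, (π θ * ptil θ - π θ * p θ) ∂ν := by
      rw [hZ, hZtil, ← integral_sub hintptil hintp]
    rw [h]
    calc |∫ θ, (π θ * ptil θ - π θ * p θ) ∂ν| ≤ ∫ θ, |π θ * ptil θ - π θ * p θ| ∂ν := by
          simpa [Real.norm_eq_abs] using
            norm_integral_le_integral_norm (fun θ => π θ * ptil θ - π θ * p θ) (μ := ν)
      _ = ∫ θ, π θ * |p θ - ptil θ| ∂ν := by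
          refine integral_congr_ae (ae_of_all _ fun θ => ?_)
          show |π θ * ptil θ - π θ * p θ| = π θ * |p θ - ptil θ|
          rw [show π θ * ptil θ - π θ * p θ = π θ * (ptil θ - p θ) by ring, abs_mul,
            abs_of_nonneg (hπ_nonneg θ), abs_sub_comm]
      _ ≤ η := hη'
  have hη0 : 0 ≤ η := le_trans (abs_nonneg _) hZdiff
  have hpt : ∀ θ, |π θ * p θ / Z - π θ * ptil θ / Ztil| ≤
      π θ * |p θ - ptil θ| / Z + π θ * ptil θ * |Ztil - Z| / (Z * Ztil) := by
    intro θ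
    have h1 : π θ * p θ / Z - π θ * ptil θ / Ztil =
        π θ * (p θ - ptil θ) / Z + π θ * ptil θ * (Ztil - Z) / (Z * Ztil) := by
      field_simp
      ring
    rw [h1]
    calc |π θ * (p θ - ptil θ) / Z + π θ * ptil θ * (Ztil - Z) / (Z * Ztil)| ≤
          |π θ * (p θ - ptil θ) / Z| + |π θ * ptil θ * (Ztil - Z) / (Z * Ztil)| := abs_add_le _ _
      _ = π θ * |p θ - ptil θ| / Z + π θ * ptil θ * |Ztil - Z| / (Z * Ztil) := by
          rw [abs_div, abs_div, abs_mul, abs_mul, abs_mul,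
            abs_of_nonneg (hπ_nonneg θ), abs_of_nonneg (hptil0 θ),
            abs_of_pos hZpos, abs_of_pos (mul_pos hZpos hZtilpos)]
  have hintLHS : Integrable (fun θ => |π θ * p θ / Z - π θ * ptil θ / Ztil|) ν :=
    ((hintp.div_const Z).sub (hintptil.div_const Ztil)).abs
  have hintRHS : Integrable
      (fun θ => π θ * |p θ - ptil θ| / Z + π θ * ptil θ * |Ztil - Z| / (Z * Ztil)) ν := by
    refine (hintdiff.div_const Z).add ?_
    have := (hintptil.mul_const (|Ztil - Z|)).div_const (Z * Ztil)
    exact this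
  calc ∫ θ, |π θ * p θ / Z - π θ * ptil θ / Ztil| ∂ν ≤
        ∫ θ, (π θ * |p θ - ptil θ| / Z + π θ * ptil θ * |Ztil - Z| / (Z * Ztil)) ∂ν :=
        integral_mono hintLHS hintRHS hpt
    _ = (∫ θ, π θ * |p θ - ptil θ| ∂ν) / Z +
        (∫ θ, π θ * ptil θ ∂ν) * |Ztil - Z| / (Z * Ztil) := by
        rw [integral_add (hintdiff.div_const Z)
          ((hintptil.mul_const (|Ztil - Z|)).div_const (Z * Ztil)),
          integral_div, integral_div, integral_mul_const]
    _ ≤ η / Z + Ztil * η / (Z * Ztil) := by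
        rw [← hZtil]
        gcongr
    _ = 2 * η / Z := by
        field_simp
        ring
end
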